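/- Let ξ(u,ω) and η(u,ω), u ∈ [0,1], ω ∈ Ω, be jointly measurable real-valued random processes such that E ∫₀¹ |ξ(u)| du < ∞, η(u) = E(ξ(u) | R) almost surely for almost every u ∈ [0,1], and for every a ∈ L∞([0,1]) the random variable ∫₀¹ a(u) η(u) du is R-measurable. Then ξ and η define random elements of the Banach space L¹([0,1]) and the (Banach-space-valued) conditional expectation of ξ given R equals η, i.e. E^R ξ = η as L¹([0,1])-valued random elements. -/

import Mathlib

open MeasureTheory Set Filter Topology TopologicalSpace ENNReal NNReal

noncomputable section

/-- Lebesgue measure restricted to `[0,1]`. -/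
def lambda01 : Measure ℝ := volume.restrict (Set.Icc (0:ℝ) 1)

/-- The Banach space `L¹([0,1])`. -/
abbrev Lone : Type := Lp ℝ 1 lambda01

instance : IsFiniteMeasure lambda01 := by
  constructor
  rw [lambda01, Measure.restrict_apply MeasurableSet.univ, Set.univ_inter, Real.volume_Icc]
  simp

lemma measurable_of_dist_meas {α X : Type*} {mα : MeasurableSpace α} [MetricSpace X]
    [SecondCountableTopology X] [mX : MeasurableSpace X] [hbX : BorelSpace X]
    {f : α → X} (h : ∀ x : X, Measurable fun a => dist (f a) x) : Measurable f := by
  obtain ⟨D, Dcount, Ddense⟩ := TopologicalSpace.exists_countable_dense X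
  have hbasis : IsTopologicalBasis {s : Set X | ∃ x ∈ D, ∃ r : ℚ, s = Metric.ball x (r:ℝ)} := by
    refine isTopologicalBasis_of_isOpen_of_nhds ?_ ?_
    · rintro u ⟨x, hx, r, rfl⟩; exact Metric.isOpen_ball
    · intro x u hxu hu
      obtain ⟨ε, hε, hball⟩ := Metric.isOpen_iff.1 hu x hxu
      obtain ⟨y, hyD, hy⟩ := Ddense.exists_dist_lt x (by positivity : (0:ℝ) < ε/3)
      obtain ⟨r, hr1, hr2⟩ := exists_rat_btwn (show ε/3 < ε/2 by linarith)
      refine ⟨Metric.ball y (r:ℝ), ⟨y, hyD, r, rfl⟩, ?_, ?_⟩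
      · rw [Metric.mem_ball]; linarith
      · intro z hz
        apply hball
        rw [Metric.mem_ball] at hz ⊢
        have := dist_triangle z y x
        rw [dist_comm y x] at this
        linarith
  have hgen : mX = MeasurableSpace.generateFrom
      {s : Set X | ∃ x ∈ D, ∃ r : ℚ, s = Metric.ball x (r:ℝ)} := by
    rw [hbX.measurable_eq, hbasis.borel_eq_generateFrom]
  rw [hgen]
  refine measurable_generateFrom ?_
  rintro t ⟨x, hx, r, rfl⟩
  have : f ⁻¹' Metric.ball x (r:ℝ) = (fun a => dist (f a) x) ⁻¹' Iio (r:ℝ) := by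
    ext a; simp [Metric.mem_ball]
  rw [this]
  exact h x measurableSet_Iio

lemma ae_eq_of_setIntegral_Iic_rat_eq {μ : Measure ℝ} [IsFiniteMeasure μ] {f g : ℝ → ℝ}
    (hf : Integrable f μ) (hg : Integrable g μ)
    (h : ∀ q : ℚ, ∫ u in Iic (q:ℝ), f u ∂μ = ∫ u in Iic (q:ℝ), g u ∂μ) :
    f =ᵐ[μ] g := by
  have hfg : Integrable (fun u => f u - g u) μ := hf.sub hg
  have hzero : ∀ q : ℚ, ∫ u in Iic (q:ℝ), (f u - g u) ∂μ = 0 := by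
    intro q
    rw [integral_sub hf.integrableOn hg.integrableOn, h q, sub_self]
  have hall : ∀ x : ℝ, ∫ u in Iic x, (f u - g u) ∂μ = 0 := by
    intro x
    have hq : ∀ n : ℕ, ∃ q : ℚ, x < (q:ℝ) ∧ (q:ℝ) < x + 1/(n+1) := by
      intro n
      exact_mod_cast exists_rat_btwn (lt_add_of_pos_right x (by positivity))
    choose q hq1 hq2 using hq
    have hqt : Tendsto (fun n => ((q n : ℚ) : ℝ)) atTop (𝓝 x) := by
      have h1 : Tendsto (fun n : ℕ => x + 1/(n+1:ℝ)) atTop (𝓝 (x + 0)) :=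
        tendsto_const_nhds.add tendsto_one_div_add_atTop_nhds_zero_nat
      rw [add_zero] at h1
      exact tendsto_of_tendsto_of_tendsto_of_le_of_le tendsto_const_nhds h1
        (fun n => (hq1 n).le) (fun n => (hq2 n).le)
    have hDCT : Tendsto (fun n => ∫ u, (Iic ((q n : ℚ) : ℝ)).indicator (fun v => f v - g v) u ∂μ)
        atTop (𝓝 (∫ u, (Iic x).indicator (fun v => f v - g v) u ∂μ)) := by
      refine tendsto_integral_of_dominated_convergence (fun u => |f u - g u|)
        (fun n => (hfg.aestronglyMeasurable).indicator measurableSet_Iic) hfg.abs ?_ ?_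
      · intro n
        filter_upwards with u
        calc ‖(Iic ((q n : ℚ) : ℝ)).indicator (fun v => f v - g v) u‖
            ≤ ‖f u - g u‖ := norm_indicator_le_norm_self _ _
          _ = |f u - g u| := Real.norm_eq_abs _
      · filter_upwards with u
        rcases le_or_gt u x with hux | hux
        · have : ∀ n, (Iic ((q n : ℚ) : ℝ)).indicator (fun v => f v - g v) u = f u - g u := by
            intro n
            exact Set.indicator_of_mem (mem_Iic.2 (le_trans hux (hq1 n).le)) _
          rw [Set.indicator_of_mem (mem_Iic.2 hux)]
          simpa [this] using tendsto_const_nhds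
        · rw [Set.indicator_of_notMem (by simpa using not_le.2 hux)]
          have hev : ∀ᶠ n in atTop, (Iic ((q n : ℚ) : ℝ)).indicator (fun v => f v - g v) u = 0 := by
            filter_upwards [hqt.eventually_lt_const hux] with n hn
            exact Set.indicator_of_notMem (by simpa using not_le.2 hn) _
          exact Tendsto.congr' (hev.mono fun n hn => hn.symm) tendsto_const_nhds
    have heq0 : ∀ n, ∫ u, (Iic ((q n : ℚ) : ℝ)).indicator (fun v => f v - g v) u ∂μ = 0 := by
      intro n
      rw [integral_indicator measurableSet_Iic]
      exact hzero (q n)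
    have : (0:ℝ) = ∫ u, (Iic x).indicator (fun v => f v - g v) u ∂μ := by
      refine tendsto_nhds_unique ?_ hDCT
      simpa [heq0] using (tendsto_const_nhds : Tendsto (fun _ : ℕ => (0:ℝ)) atTop (𝓝 0))
    rw [← integral_indicator measurableSet_Iic, ← this]
  -- withDensity argument
  have hmeas1 : AEMeasurable (fun u => ENNReal.ofReal (f u - g u)) μ :=
    ENNReal.measurable_ofReal.comp_aemeasurable hfg.aemeasurable
  have hmeas2 : AEMeasurable (fun u => ENNReal.ofReal (-(f u - g u))) μ :=
    ENNReal.measurable_ofReal.comp_aemeasurable hfg.neg.aemeasurable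
  have hbound : ∀ u : ℝ, ENNReal.ofReal (f u - g u) ≤ (‖f u - g u‖₊ : ℝ≥0∞) := by
    intro u
    rw [show ((‖f u - g u‖₊ : ℝ≥0∞)) = ENNReal.ofReal ‖f u - g u‖ from (ofReal_norm _).symm]
    exact ENNReal.ofReal_le_ofReal (le_abs_self _)
  have hbound' : ∀ u : ℝ, ENNReal.ofReal (-(f u - g u)) ≤ (‖f u - g u‖₊ : ℝ≥0∞) := by
    intro u
    rw [show ((‖f u - g u‖₊ : ℝ≥0∞)) = ENNReal.ofReal ‖f u - g u‖ from (ofReal_norm _).symm]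
    exact ENNReal.ofReal_le_ofReal (neg_le_abs _)
  have hfin1 : ∫⁻ u, ENNReal.ofReal (f u - g u) ∂μ ≠ ⊤ :=
    (lt_of_le_of_lt (lintegral_mono hbound) hfg.2).ne
  have hfin2 : ∫⁻ u, ENNReal.ofReal (-(f u - g u)) ∂μ ≠ ⊤ :=
    (lt_of_le_of_lt (lintegral_mono hbound') hfg.2).ne
  have hrfin1 : ∀ x : ℝ, ∫⁻ u in Iic x, ENNReal.ofReal (f u - g u) ∂μ ≠ ⊤ := fun x =>
    ((setLIntegral_le_lintegral _ _).trans_lt hfin1.lt_top).ne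
  have hrfin2 : ∀ x : ℝ, ∫⁻ u in Iic x, ENNReal.ofReal (-(f u - g u)) ∂μ ≠ ⊤ := fun x =>
    ((setLIntegral_le_lintegral _ _).trans_lt hfin2.lt_top).ne
  have key : μ.withDensity (fun u => ENNReal.ofReal (f u - g u))
      = μ.withDensity (fun u => ENNReal.ofReal (-(f u - g u))) := by
    haveI h1 : IsFiniteMeasure (μ.withDensity (fun u => ENNReal.ofReal (f u - g u))) :=
      isFiniteMeasure_withDensity hfin1
    refine Measure.ext_of_Iic _ _ (fun x => ?_)
    rw [withDensity_apply _ measurableSet_Iic, withDensity_apply _ measurableSet_Iic]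
    have h0 := hall x
    rw [integral_eq_lintegral_pos_part_sub_lintegral_neg_part hfg.integrableOn, sub_eq_zero] at h0
    exact (ENNReal.toReal_eq_toReal_iff' (hrfin1 x) (hrfin2 x)).1 h0
  rw [withDensity_eq_iff_of_sigmaFinite hmeas1 hmeas2] at key
  filter_upwards [key] with u hu
  have hu' : ENNReal.ofReal (f u - g u) = ENNReal.ofReal (-(f u - g u)) := hu
  rcases lt_trichotomy (f u - g u) 0 with hlt | heq | hgt
  · exfalso
    have h1 : ENNReal.ofReal (f u - g u) = 0 := ENNReal.ofReal_eq_zero.2 hlt.le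
    rw [h1] at hu'
    have := ENNReal.ofReal_eq_zero.1 hu'.symm
    linarith
  · linarith [sub_eq_zero.1 heq]
  · exfalso
    have h1 : ENNReal.ofReal (-(f u - g u)) = 0 := ENNReal.ofReal_eq_zero.2 (by linarith)
    rw [h1] at hu'
    have := ENNReal.ofReal_eq_zero.1 hu'
    linarith

def setIntegralCLM (s : Set ℝ) (hs : MeasurableSet s) : Lone →L[ℝ] ℝ :=
  LinearMap.mkContinuous
    { toFun := fun f => ∫ u in s, f u ∂lambda01
      map_add' := fun f g => by
        rw [setIntegral_congr_ae hs ((Lp.coeFn_add f g).mono fun u hu _ => hu)]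
        exact integral_add (L1.integrable_coeFn f).integrableOn
          (L1.integrable_coeFn g).integrableOn
      map_smul' := fun c f => by
        simp only [RingHom.id_apply]
        rw [setIntegral_congr_ae hs ((Lp.coeFn_smul c f).mono fun u hu _ => hu)]
        exact integral_smul c _ }
    1 (fun f => by
      simp only [LinearMap.coe_mk, AddHom.coe_mk, one_mul]
      calc ‖∫ u in s, f u ∂lambda01‖ ≤ ∫ u in s, ‖f u‖ ∂lambda01 :=
            norm_integral_le_integral_norm _
        _ ≤ ∫ u, ‖f u‖ ∂lambda01 := integral_mono_measure Measure.restrict_le_self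
            (Eventually.of_forall fun u => norm_nonneg _) (L1.integrable_coeFn f).norm
        _ = ‖f‖ := (L1.norm_eq_integral_norm f).symm)

lemma setIntegralCLM_apply (s : Set ℝ) (hs : MeasurableSet s) (f : Lone) :
    setIntegralCLM s hs f = ∫ u in s, f u ∂lambda01 := rfl

lemma condexp_comp_clm {Ω E F : Type*} [NormedAddCommGroup E] [NormedSpace ℝ E] [CompleteSpace E]
    [NormedAddCommGroup F] [NormedSpace ℝ F] [CompleteSpace F]
    {R : MeasurableSpace Ω} {mΩ : MeasurableSpace Ω} {P : Measure Ω} (hR : R ≤ mΩ)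
    [SigmaFinite (P.trim hR)] (L : E →L[ℝ] F) {f : Ω → E} (hf : Integrable f P) :
    (fun ω => L ((condExp R P f) ω)) =ᵐ[P] condExp R P (fun ω => L (f ω)) := by
  have hg : Integrable (condExp R P f) P := integrable_condExp
  have hLg : Integrable (fun ω => L ((condExp R P f) ω)) P := L.integrable_comp hg
  refine ae_eq_condExp_of_forall_setIntegral_eq hR (L.integrable_comp hf)
    (fun A hA hPA => hLg.integrableOn) (fun A hA hPA => ?_) ?_
  · calc ∫ ω in A, L ((condExp R P f) ω) ∂P
        = L (∫ ω in A, (condExp R P f) ω ∂P) := L.integral_comp_comm hg.integrableOn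
      _ = L (∫ ω in A, f ω ∂P) := by rw [setIntegral_condExp hR hf hA]
      _ = ∫ ω in A, L (f ω) ∂P := (L.integral_comp_comm hf.integrableOn).symm
  · have hsm : StronglyMeasurable[R] (condExp R P f) := stronglyMeasurable_condExp
    exact StronglyMeasurable.aestronglyMeasurable
      (L.continuous.comp_stronglyMeasurable hsm)

theorem main_aux {Ω : Type*} (R : MeasurableSpace Ω) {mΩ : MeasurableSpace Ω} (P : Measure Ω)
    [IsProbabilityMeasure P] (hR : R ≤ mΩ)
    (ξ η : ℝ → Ω → ℝ)
    (hξmeas : Measurable (fun p : ℝ × Ω => ξ p.1 p.2))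
    (hηmeas : Measurable (fun p : ℝ × Ω => η p.1 p.2))
    (hint : ∫⁻ ω, (∫⁻ u, ‖ξ u ω‖₊ ∂lambda01) ∂P < ⊤)
    (hcond : ∀ᵐ u ∂lambda01, (fun ω => η u ω) =ᵐ[P] condExp R P (fun ω => ξ u ω))
    (hmeasR : ∀ a : ℝ → ℝ, Measurable a → (∃ C : ℝ, ∀ u : ℝ, |a u| ≤ C) →
      Measurable[R] (fun ω => ∫ u, a u * η u ω ∂lambda01)) :
    ∃ Ξ Η : Ω → Lone,
      AEStronglyMeasurable Ξ P ∧ AEStronglyMeasurable Η P ∧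
      (∀ᵐ ω ∂P, (Ξ ω : ℝ → ℝ) =ᵐ[lambda01] fun u => ξ u ω) ∧
      (∀ᵐ ω ∂P, (Η ω : ℝ → ℝ) =ᵐ[lambda01] fun u => η u ω) ∧
      condExp R P Ξ =ᵐ[P] Η := by
  classical
  have hξm1 : ∀ ω, Measurable fun u => ξ u ω := fun ω =>
    hξmeas.comp (measurable_id.prodMk measurable_const)
  set G : Ω → ℝ≥0∞ := fun ω => ∫⁻ u, ‖ξ u ω‖₊ ∂lambda01 with hGdef
  have hGmeas : Measurable G := Measurable.lintegral_prod_left hξmeas.enorm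
  have hGae : ∀ᵐ ω ∂P, G ω < ⊤ := ae_lt_top hGmeas hint.ne
  have hmem : ∀ ω, G ω < ⊤ → MemLp (fun u => ξ u ω) 1 lambda01 := fun ω hω =>
    ⟨(hξm1 ω).aestronglyMeasurable, by rwa [eLpNorm_one_eq_lintegral_enorm]⟩
  set Ξ : Ω → Lone := fun ω => if hω : G ω < ⊤ then (hmem ω hω).toLp _ else 0 with hΞdef
  have hΞcoe : ∀ᵐ ω ∂P, (Ξ ω : ℝ → ℝ) =ᵐ[lambda01] fun u => ξ u ω := by
    filter_upwards [hGae] with ω hω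
    have h1 : Ξ ω = (hmem ω hω).toLp _ := dif_pos hω
    rw [h1]
    exact (hmem ω hω).coeFn_toLp
  haveI hfact : Fact ((1:ℝ≥0∞) ≤ 1) := ⟨le_refl _⟩
  haveI hfact2 : Fact ((1:ℝ≥0∞) ≠ ⊤) := ⟨one_ne_top⟩
  haveI hsep : MeasureTheory.IsSeparable lambda01 := inferInstance
  haveI hsc : SecondCountableTopology Lone := MeasureTheory.Lp.SecondCountableTopology
  have hΞsm : AEStronglyMeasurable Ξ P := by
    letI : MeasurableSpace Lone := borel Lone
    haveI : BorelSpace Lone := ⟨rfl⟩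
    refine (Measurable.stronglyMeasurable ?_).aestronglyMeasurable
    refine measurable_of_dist_meas (fun g => ?_)
    have hgm : Measurable (⇑g : ℝ → ℝ) := (Lp.stronglyMeasurable g).measurable
    have hm0 : Measurable (Function.uncurry fun (u : ℝ) (ω' : Ω) => (‖ξ u ω' - g u‖₊ : ℝ≥0∞)) :=
      (hξmeas.sub (hgm.comp measurable_fst)).enorm
    have hD : Measurable fun ω => (∫⁻ u, ‖ξ u ω - g u‖₊ ∂lambda01).toReal :=
      (Measurable.lintegral_prod_left hm0).ennreal_toReal
    have heq : (fun ω => dist (Ξ ω) g) = fun ω =>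
        if G ω < ⊤ then (∫⁻ u, ‖ξ u ω - g u‖₊ ∂lambda01).toReal else dist (0 : Lone) g := by
      funext ω
      by_cases hω : G ω < ⊤
      · rw [if_pos hω]
        have h1 : Ξ ω = (hmem ω hω).toLp _ := dif_pos hω
        have h2 : (⇑((hmem ω hω).toLp _) : ℝ → ℝ) - ⇑g =ᵐ[lambda01] fun u => ξ u ω - g u := by
          filter_upwards [(hmem ω hω).coeFn_toLp] with u hu
          simp [hu]
        rw [h1, Lp.dist_def, eLpNorm_congr_ae h2, eLpNorm_one_eq_lintegral_enorm]
        rfl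
      · have h1 : Ξ ω = 0 := dif_neg hω
        rw [if_neg hω, h1]
    rw [heq]
    exact Measurable.ite (measurableSet_lt hGmeas measurable_const) hD measurable_const
  have hΞint : Integrable Ξ P := by
    refine ⟨hΞsm, ?_⟩
    have hnorm : ∀ᵐ ω ∂P, (‖Ξ ω‖₊ : ℝ≥0∞) = G ω := by
      filter_upwards [hGae] with ω hω
      have h1 : Ξ ω = (hmem ω hω).toLp _ := dif_pos hω
      rw [h1]
      exact (Lp.enorm_toLp _).trans eLpNorm_one_eq_lintegral_enorm
    show (∫⁻ ω, ‖Ξ ω‖₊ ∂P) < ⊤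
    calc (∫⁻ ω, ‖Ξ ω‖₊ ∂P) = ∫⁻ ω, G ω ∂P := lintegral_congr_ae hnorm
      _ < ⊤ := hint
  have hξprod : Integrable (fun p : ℝ × Ω => ξ p.1 p.2) (lambda01.prod P) := by
    refine ⟨hξmeas.aestronglyMeasurable, ?_⟩
    show (∫⁻ p, ‖ξ p.1 p.2‖ₑ ∂(lambda01.prod P)) < ⊤
    rw [lintegral_prod _ hξmeas.enorm.aemeasurable]
    calc (∫⁻ u, ∫⁻ ω, (‖ξ u ω‖₊ : ℝ≥0∞) ∂P ∂lambda01)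
        = ∫⁻ ω, ∫⁻ u, (‖ξ u ω‖₊ : ℝ≥0∞) ∂lambda01 ∂P :=
          lintegral_lintegral_swap hξmeas.enorm.aemeasurable
      _ < ⊤ := hint
  have hξslice_u : ∀ᵐ u ∂lambda01, Integrable (fun ω => ξ u ω) P := by
    have := hξprod.prod_right_ae
    filter_upwards [this] with u hu using hu
  have hηb : ∀ᵐ u ∂lambda01, (∫⁻ ω, ‖η u ω‖₊ ∂P) ≤ ∫⁻ ω, ‖ξ u ω‖₊ ∂P := by
    filter_upwards [hcond, hξslice_u] with u hu hu2
    have hce : Integrable (condExp R P (fun ω => ξ u ω)) P := integrable_condExp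
    calc (∫⁻ ω, ‖η u ω‖₊ ∂P)
        = ∫⁻ ω, ‖(condExp R P (fun ω' => ξ u ω')) ω‖₊ ∂P :=
          lintegral_congr_ae (hu.mono fun ω h => by simp only [] at h ⊢; rw [h])
      _ = ENNReal.ofReal (∫ ω, ‖(condExp R P (fun ω' => ξ u ω')) ω‖ ∂P) :=
          (ofReal_integral_norm_eq_lintegral_enorm hce).symm
      _ ≤ ENNReal.ofReal (∫ ω, ‖ξ u ω‖ ∂P) := by
          apply ENNReal.ofReal_le_ofReal
          simpa [Real.norm_eq_abs] using integral_abs_condExp_le (μ := P) (m := R) (fun ω => ξ u ω)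
      _ = ∫⁻ ω, ‖ξ u ω‖₊ ∂P := ofReal_integral_norm_eq_lintegral_enorm hu2
  have hηprod : Integrable (fun p : ℝ × Ω => η p.1 p.2) (lambda01.prod P) := by
    refine ⟨hηmeas.aestronglyMeasurable, ?_⟩
    show (∫⁻ p, ‖η p.1 p.2‖ₑ ∂(lambda01.prod P)) < ⊤
    rw [lintegral_prod _ hηmeas.enorm.aemeasurable]
    calc (∫⁻ u, ∫⁻ ω, (‖η u ω‖₊ : ℝ≥0∞) ∂P ∂lambda01)
        ≤ ∫⁻ u, ∫⁻ ω, (‖ξ u ω‖₊ : ℝ≥0∞) ∂P ∂lambda01 := lintegral_mono_ae hηb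
      _ = ∫⁻ ω, ∫⁻ u, (‖ξ u ω‖₊ : ℝ≥0∞) ∂lambda01 ∂P :=
          lintegral_lintegral_swap hξmeas.enorm.aemeasurable
      _ < ⊤ := hint
  have hηslice : ∀ᵐ ω ∂P, Integrable (fun u => η u ω) lambda01 := by
    have := hηprod.prod_left_ae
    filter_upwards [this] with ω hω using hω
  -- integrability of pairings
  have hξints : ∀ s : Set ℝ, Integrable (fun ω => ∫ u in s, ξ u ω ∂lambda01) P := by
    intro s
    have h1 : Integrable (fun p : ℝ × Ω => ξ p.1 p.2) ((lambda01.restrict s).prod P) := by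
      have h2 := hξprod.integrableOn (s := s ×ˢ (univ : Set Ω))
      rwa [IntegrableOn, ← Measure.prod_restrict, Measure.restrict_univ] at h2
    exact h1.integral_prod_right
  have hηints : ∀ s : Set ℝ, Integrable (fun ω => ∫ u in s, η u ω ∂lambda01) P := by
    intro s
    have h1 : Integrable (fun p : ℝ × Ω => η p.1 p.2) ((lambda01.restrict s).prod P) := by
      have h2 := hηprod.integrableOn (s := s ×ˢ (univ : Set Ω))
      rwa [IntegrableOn, ← Measure.prod_restrict, Measure.restrict_univ] at h2
    exact h1.integral_prod_right
  -- the key identification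
  have key : ∀ s : Set ℝ, MeasurableSet s →
      (fun ω => ∫ u in s, η u ω ∂lambda01) =ᵐ[P]
        condExp R P (fun ω => ∫ u in s, ξ u ω ∂lambda01) := by
    intro s hs
    refine ae_eq_condExp_of_forall_setIntegral_eq hR (hξints s)
      (fun A hA hPA => (hηints s).integrableOn) (fun A hA hPA => ?_) ?_
    · have hAm : MeasurableSet A := hR _ hA
      have hηswap : ∫ ω in A, ∫ u in s, η u ω ∂lambda01 ∂P
          = ∫ u in s, ∫ ω in A, η u ω ∂P ∂lambda01 := by
        refine integral_integral_swap ?_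
        have h1 := hηprod.swap.integrableOn (s := A ×ˢ s)
        rwa [IntegrableOn, ← Measure.prod_restrict] at h1
      have hξswap : ∫ ω in A, ∫ u in s, ξ u ω ∂lambda01 ∂P
          = ∫ u in s, ∫ ω in A, ξ u ω ∂P ∂lambda01 := by
        refine integral_integral_swap ?_
        have h1 := hξprod.swap.integrableOn (s := A ×ˢ s)
        rwa [IntegrableOn, ← Measure.prod_restrict] at h1
      rw [hηswap, hξswap]
      have hinner : ∀ᵐ u ∂lambda01, ∫ ω in A, η u ω ∂P = ∫ ω in A, ξ u ω ∂P := by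
        filter_upwards [hcond, hξslice_u] with u hu hu2
        calc ∫ ω in A, η u ω ∂P
            = ∫ ω in A, (condExp R P fun ω' => ξ u ω') ω ∂P :=
              setIntegral_congr_ae hAm (hu.mono fun ω h _ => h)
          _ = ∫ ω in A, ξ u ω ∂P := setIntegral_condExp hR hu2 hA
      exact integral_congr_ae (ae_restrict_of_ae hinner)
    · have hind : Measurable[R] fun ω => ∫ u, (s.indicator (fun _ => (1:ℝ)) u) * η u ω ∂lambda01 :=
        hmeasR _ (measurable_one.indicator hs) ⟨1, fun u => by
          by_cases hu : u ∈ s <;> simp [Set.indicator_apply, hu]⟩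
      have heq : (fun ω => ∫ u in s, η u ω ∂lambda01)
          = fun ω => ∫ u, (s.indicator (fun _ => (1:ℝ)) u) * η u ω ∂lambda01 := by
        funext ω
        rw [← integral_indicator hs]
        congr 1
        funext u
        by_cases hu : u ∈ s <;> simp [Set.indicator_apply, hu]
      rw [heq]
      exact (Measurable.stronglyMeasurable hind).aestronglyMeasurable
  have hlink : ∀ (s : Set ℝ) (hs : MeasurableSet s),
      (fun ω => setIntegralCLM s hs ((condExp R P Ξ) ω)) =ᵐ[P]
        fun ω => ∫ u in s, η u ω ∂lambda01 := by
    intro s hs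
    have h1 : (fun ω => setIntegralCLM s hs (Ξ ω)) =ᵐ[P]
        fun ω => ∫ u in s, ξ u ω ∂lambda01 := by
      filter_upwards [hΞcoe] with ω hω
      rw [setIntegralCLM_apply]
      exact setIntegral_congr_ae hs (hω.mono fun u h _ => h)
    have h2 := condexp_comp_clm hR (setIntegralCLM s hs) hΞint
    have h3 : condExp R P (fun ω => setIntegralCLM s hs (Ξ ω)) =ᵐ[P]
        condExp R P (fun ω => ∫ u in s, ξ u ω ∂lambda01) := condExp_congr_ae h1
    exact h2.trans (h3.trans (key s hs).symm)
  have hΗcoe : ∀ᵐ ω ∂P, ((condExp R P Ξ) ω : ℝ → ℝ) =ᵐ[lambda01] fun u => η u ω := by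
    have hq : ∀ᵐ ω ∂P, ∀ q : ℚ,
        ∫ u in Iic (q:ℝ), ((condExp R P Ξ) ω : ℝ → ℝ) u ∂lambda01
          = ∫ u in Iic (q:ℝ), η u ω ∂lambda01 :=
      ae_all_iff.2 fun q => hlink (Iic (q:ℝ)) measurableSet_Iic
    filter_upwards [hq, hηslice] with ω hω hωint
    exact ae_eq_of_setIntegral_Iic_rat_eq (L1.integrable_coeFn ((condExp R P Ξ) ω)) hωint hω
  have hΗsm : AEStronglyMeasurable (condExp R P Ξ) P :=
    ((stronglyMeasurable_condExp (m := R)).mono hR).aestronglyMeasurable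
  exact ⟨Ξ, condExp R P Ξ, hΞsm, hΗsm, hΞcoe, hΗcoe, EventuallyEq.rfl⟩

/-- Let `ξ(u,ω)`, `η(u,ω)` be jointly measurable processes with
`E ∫₀¹ |ξ(u)| du < ∞`, `η(u) = E(ξ(u) | R)` a.s. for a.e. `u`, and such that for every
`a ∈ L∞([0,1])` the random variable `∫₀¹ a(u) η(u) du` is `R`-measurable.  Then `ξ` and `η`
define random elements of `L¹([0,1])` and `E^R ξ = η` as `L¹([0,1])`-valued random elements. -/
theorem banach_valued_condexp
    {Ω : Type*} (R : MeasurableSpace Ω) {mΩ : MeasurableSpace Ω} (P : Measure Ω) [IsProbabilityMeasure P]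
    (hR : R ≤ mΩ)
    (ξ η : ℝ → Ω → ℝ)
    (hξmeas : Measurable (fun p : ℝ × Ω => ξ p.1 p.2))
    (hηmeas : Measurable (fun p : ℝ × Ω => η p.1 p.2))
    (hint : ∫⁻ ω, (∫⁻ u, ‖ξ u ω‖₊ ∂lambda01) ∂P < ⊤)
    (hcond : ∀ᵐ u ∂lambda01, (fun ω => η u ω) =ᵐ[P] P[(fun ω => ξ u ω) | R])
    (hmeasR : ∀ a : ℝ → ℝ, Measurable a → (∃ C : ℝ, ∀ u : ℝ, |a u| ≤ C) →
      Measurable[R] (fun ω => ∫ u, a u * η u ω ∂lambda01)) :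
    ∃ Ξ Η : Ω → Lone,
      AEStronglyMeasurable Ξ P ∧ AEStronglyMeasurable Η P ∧
      (∀ᵐ ω ∂P, (Ξ ω : ℝ → ℝ) =ᵐ[lambda01] fun u => ξ u ω) ∧
      (∀ᵐ ω ∂P, (Η ω : ℝ → ℝ) =ᵐ[lambda01] fun u => η u ω) ∧
      P[Ξ | R] =ᵐ[P] Η := by
  have hle : (@Prod.instMeasurableSpace ℝ Ω Real.measurableSpace R)
      ≤ (@Prod.instMeasurableSpace ℝ Ω Real.measurableSpace mΩ) :=
    sup_le_sup le_rfl (MeasurableSpace.comap_mono hR)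
  exact main_aux R P hR ξ η hξmeas hηmeas hint hcond hmeasR

end
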